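/- arXiv:1602.09118 — 3 statements merged into one kernel-verified Lean document; each statement's English description precedes it below -/
import Mathlib

section
/- In the finite MDP setup, for any function f : S → ℝ and any policy π, J(π) = Σ_s μ(s) f(s) + (1/(1−γ)) Σ_s d^π(s) Σ_a π(a|s) Σ_{s'} P(s'|s,a) (R(s,a,s') + γf(s') − f(s)). -/
/-!
The discounted state distribution solves the flow equation `(I - γ P_π) d^π = (1 - γ) μ`, so
pairing it with `f (I - γ P_π)` gives `(1 - γ) Σ_s μ(s) f(s)`. Since
`Σ_a π(a|s) Σ_{s'} P(s'|s,a) (γ f(s') - f(s))` is exactly `-(f (I - γ P_π))(s)`, the potential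
terms on the right-hand side telescope to `-Σ_s μ(s) f(s)`. The flow equation needs
`I - γ P_π` to be invertible: `P_π` is column stochastic, so `v ↦ v P_π` does not increase the sup
norm and `v = γ v P_π` forces `v = 0`.
-/

open Finset Matrix

noncomputable section

/-- The state-transition matrix of policy `π`: `(Pmat P π) s' s = Σ_a P(s'|s,a) π(a|s)`. -/
def Pmat {S A : Type*} [Fintype A] (P : S → A → S → ℝ) (π : S → A → ℝ) : Matrix S S ℝ :=
  Matrix.of fun s' s => ∑ a, P s a s' * π s a

/-- The discounted future state distribution `d^π = (1-γ)(I - γ P_π)⁻¹ μ`. -/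
def dpi {S A : Type*} [Fintype S] [Fintype A] [DecidableEq S]
    (γ : ℝ) (P : S → A → S → ℝ) (μ : S → ℝ) (π : S → A → ℝ) : S → ℝ :=
  (1 - γ) • ((1 - γ • Pmat P π)⁻¹).mulVec μ

/-- The expected discounted return `J(π)`. -/
def J {S A : Type*} [Fintype S] [Fintype A] [DecidableEq S]
    (γ : ℝ) (P : S → A → S → ℝ) (R : S → A → S → ℝ) (μ : S → ℝ) (π : S → A → ℝ) : ℝ :=
  (1 / (1 - γ)) * ∑ s, dpi γ P μ π s * ∑ a, π s a * ∑ s', P s a s' * R s a s'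

namespace Matrix

variable {n : Type*} [Fintype n] [DecidableEq n] {M : Matrix n n ℝ}

theorem norm_vecMul_le_of_mem_colStochastic (hM : M ∈ colStochastic ℝ n) (v : n → ℝ) :
    ‖v ᵥ* M‖ ≤ ‖v‖ := by
  refine (pi_norm_le_iff_of_nonneg (norm_nonneg v)).2 fun j => ?_
  calc ‖∑ i, v i * M i j‖ ≤ ∑ i, ‖v i‖ * M i j := by
        refine (norm_sum_le _ _).trans (sum_le_sum fun i _ => ?_)
        rw [norm_mul, Real.norm_of_nonneg (nonneg_of_mem_colStochastic hM)]
    _ ≤ ∑ i, ‖v‖ * M i j := sum_le_sum fun i _ =>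
        mul_le_mul_of_nonneg_right (norm_le_pi_norm v i) (nonneg_of_mem_colStochastic hM)
    _ = ‖v‖ := by rw [← mul_sum, sum_col_of_mem_colStochastic hM, mul_one]

theorem isUnit_one_sub_smul_of_mem_colStochastic (hM : M ∈ colStochastic ℝ n) {γ : ℝ}
    (hγ : |γ| < 1) : IsUnit (1 - γ • M) := by
  rw [isUnit_iff_isUnit_det, isUnit_iff_ne_zero, Ne, ← exists_vecMul_eq_zero_iff]
  rintro ⟨v, hv, hvM⟩
  have hfix : v = γ • (v ᵥ* M) := by
    rwa [vecMul_sub, vecMul_one, vecMul_smul, sub_eq_zero] at hvM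
  have hcontract : ‖v‖ ≤ |γ| * ‖v‖ :=
    calc ‖v‖ = |γ| * ‖v ᵥ* M‖ := by
          conv_lhs => rw [hfix]
          rw [norm_smul, Real.norm_eq_abs]
      _ ≤ |γ| * ‖v‖ := by gcongr; exact norm_vecMul_le_of_mem_colStochastic hM v
  exact hv (norm_eq_zero.1 (by nlinarith [norm_nonneg v, abs_nonneg γ]))

end Matrix

section MDP

variable {S A : Type*} [Fintype S] [Fintype A] {P : S → A → S → ℝ}
  {π : S → A → ℝ}

theorem vecMul_Pmat_apply (f : S → ℝ) (s : S) :
    (f ᵥ* Pmat P π) s = ∑ a, π s a * ∑ s', P s a s' * f s' := by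
  simp only [vecMul, dotProduct, Pmat, of_apply, mul_sum]
  rw [sum_comm]
  exact sum_congr rfl fun _ _ => sum_congr rfl fun _ _ => by ring

variable [DecidableEq S]

theorem Pmat_mem_colStochastic (hP0 : ∀ s a s', 0 ≤ P s a s') (hP1 : ∀ s a, ∑ s', P s a s' = 1)
    (hπ0 : ∀ s a, 0 ≤ π s a) (hπ1 : ∀ s, ∑ a, π s a = 1) : Pmat P π ∈ colStochastic ℝ S := by
  refine mem_colStochastic_iff_sum.2 ⟨fun s' s => ?_, fun s => ?_⟩
  · exact sum_nonneg fun a _ => mul_nonneg (hP0 s a s') (hπ0 s a)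
  · simp only [Pmat, of_apply]
    rw [sum_comm]
    simp [← sum_mul, hP1, hπ1]

theorem sum_policy_mul_sum_shaped_reward (hP1 : ∀ s a, ∑ s', P s a s' = 1)
    (hπ1 : ∀ s, ∑ a, π s a = 1) (R : S → A → S → ℝ) (γ : ℝ) (f : S → ℝ) (s : S) :
    ∑ a, π s a * ∑ s', P s a s' * (R s a s' + γ * f s' - f s)
      = ∑ a, π s a * ∑ s', P s a s' * R s a s' - (f ᵥ* (1 - γ • Pmat P π)) s := by
  rw [vecMul_sub, vecMul_one, vecMul_smul, Pi.sub_apply, Pi.smul_apply, vecMul_Pmat_apply]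
  simp only [mul_add, mul_sub, sum_add_distrib, sum_sub_distrib, ← sum_mul, ← mul_sum,
    mul_left_comm _ γ, hP1, hπ1, one_mul, smul_eq_mul]
  ring

theorem one_sub_smul_Pmat_mulVec_dpi {γ : ℝ} (μ : S → ℝ) (h : IsUnit (1 - γ • Pmat P π)) :
    (1 - γ • Pmat P π) *ᵥ dpi γ P μ π = (1 - γ) • μ := by
  rw [dpi, mulVec_smul, mulVec_mulVec, mul_nonsing_inv _ ((isUnit_iff_isUnit_det _).1 h),
    one_mulVec]

theorem sum_dpi_mul_vecMul_one_sub_smul_Pmat {γ : ℝ} {μ : S → ℝ}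
    (h : IsUnit (1 - γ • Pmat P π)) (f : S → ℝ) :
    ∑ s, dpi γ P μ π s * (f ᵥ* (1 - γ • Pmat P π)) s = (1 - γ) * ∑ s, μ s * f s := by
  change dpi γ P μ π ⬝ᵥ (f ᵥ* (1 - γ • Pmat P π)) = (1 - γ) * (μ ⬝ᵥ f)
  rw [dotProduct_comm, ← dotProduct_mulVec, one_sub_smul_Pmat_mulVec_dpi μ h, dotProduct_smul,
    dotProduct_comm, smul_eq_mul]

end MDP

theorem stmt_3_general {S A : Type*} [Fintype S] [Fintype A] [DecidableEq S]
    (γ : ℝ) (hγ0 : 0 ≤ γ) (hγ1 : γ < 1)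
    (P : S → A → S → ℝ) (hP0 : ∀ s a s', 0 ≤ P s a s') (hP1 : ∀ s a, ∑ s', P s a s' = 1)
    (R : S → A → S → ℝ)
    (μ : S → ℝ)
    (π : S → A → ℝ) (hπ0 : ∀ s a, 0 ≤ π s a) (hπ1 : ∀ s, ∑ a, π s a = 1)
    (f : S → ℝ) :
    J γ P R μ π
      = (∑ s, μ s * f s)
        + (1 / (1 - γ)) * ∑ s, dpi γ P μ π s *
            ∑ a, π s a * ∑ s', P s a s' * (R s a s' + γ * f s' - f s) := by
  have hγ : 1 - γ ≠ 0 := (sub_pos.2 hγ1).ne'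
  have hunit := isUnit_one_sub_smul_of_mem_colStochastic
    (Pmat_mem_colStochastic hP0 hP1 hπ0 hπ1) (abs_lt.2 ⟨by linarith, hγ1⟩)
  simp_rw [_root_.J, sum_policy_mul_sum_shaped_reward hP1 hπ1, mul_sub, sum_sub_distrib,
    sum_dpi_mul_vecMul_one_sub_smul_Pmat hunit]
  field_simp
  ring

theorem stmt_3 {S A : Type*} [Fintype S] [Fintype A] [Nonempty S] [Nonempty A] [DecidableEq S]
    (γ : ℝ) (hγ0 : 0 ≤ γ) (hγ1 : γ < 1)
    (P : S → A → S → ℝ) (hP0 : ∀ s a s', 0 ≤ P s a s') (hP1 : ∀ s a, ∑ s', P s a s' = 1)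
    (R : S → A → S → ℝ)
    (μ : S → ℝ) (hμ0 : ∀ s, 0 ≤ μ s) (hμ1 : ∑ s, μ s = 1)
    (π : S → A → ℝ) (hπ0 : ∀ s a, 0 ≤ π s a) (hπ1 : ∀ s, ∑ a, π s a = 1)
    (f : S → ℝ) :
    J γ P R μ π
      = (∑ s, μ s * f s)
        + (1 / (1 - γ)) * ∑ s, dpi γ P μ π s *
            ∑ a, π s a * ∑ s', P s a s' * (R s a s' + γ * f s' - f s) :=
  stmt_3_general γ hγ0 hγ1 P hP0 hP1 R μ π hπ0 hπ1 f
end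
end

section
/- In the finite MDP setup, for any two policies π and π' and with Δ = P_{π'} − P_π, the vector Δd^π satisfies the ℓ1 bound Σ_{s'} |Σ_s Δ(s'|s) d^π(s)| ≤ 2 Σ_s d^π(s) D_TV(π'||π)[s]. -/
open Finset Matrix

noncomputable section

/-- The per-state total variational divergence `D_TV(π'||π)[s] = (1/2) Σ_a |π'(a|s) - π(a|s)|`. -/
def DTV {S A : Type*} [Fintype A] (π' π : S → A → ℝ) (s : S) : ℝ :=
  (1 / 2) * ∑ a, |π' s a - π s a|

/-!
Write `Δ = P_{π'} - P_π`. Its column at `s` is `Σ_a P(·|s,a) (π'(a|s) - π(a|s))`, whose ℓ1 norm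
is at most `Σ_a |π'(a|s) - π(a|s)| = 2 D_TV(π'||π)[s]` because each `P(·|s,a)` is a probability
vector. The triangle inequality then bounds `‖Δ d‖₁` by `Σ_s d(s) ‖Δ e_s‖₁` for every `d ≥ 0`,
and `d^π ≥ 0` since `(I - γP_π)⁻¹ = Σ_n (γP_π)ⁿ` is a series of nonnegative matrices.
-/

namespace Matrix

variable {n : Type*} [Fintype n] [DecidableEq n]

open scoped Matrix.Norms.Operator in
theorem inv_one_sub_apply_nonneg_of_row_sum_lt_one {T : Matrix n n ℝ} (hT0 : ∀ i j, 0 ≤ T i j)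
    (hT1 : ∀ i, ∑ j, T i j < 1) (i j : n) : 0 ≤ (1 - T)⁻¹ i j := by
  have hnorm : ‖T‖ < 1 := by
    rw [linfty_opNorm_def, ← NNReal.coe_one, NNReal.coe_lt_coe,
      Finset.sup_lt_iff zero_lt_one]
    intro i _
    rw [← NNReal.coe_lt_coe]
    push_cast
    simpa only [Real.norm_of_nonneg (hT0 i _)] using hT1 i
  have hsum := hasSum_geom_series_inverse T hnorm
  rw [← nonsing_inv_eq_ringInverse] at hsum
  exact (Pi.hasSum.mp (Pi.hasSum.mp hsum i) j).nonneg fun k => pow_apply_nonneg hT0 k i j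

theorem inv_one_sub_apply_nonneg_of_col_sum_lt_one {T : Matrix n n ℝ} (hT0 : ∀ i j, 0 ≤ T i j)
    (hT1 : ∀ j, ∑ i, T i j < 1) (i j : n) : 0 ≤ (1 - T)⁻¹ i j := by
  have h := inv_one_sub_apply_nonneg_of_row_sum_lt_one (T := Tᵀ) (fun i j => hT0 j i) hT1 j i
  rwa [← transpose_one, ← transpose_sub, ← transpose_nonsing_inv, transpose_apply] at h

end Matrix

section MDP

variable {S A : Type*} [Fintype A] {P : S → A → S → ℝ} {π π' : S → A → ℝ}

theorem Pmat_apply_nonneg (hP0 : ∀ s a s', 0 ≤ P s a s') (hπ0 : ∀ s a, 0 ≤ π s a) (s' s : S) :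
    0 ≤ Pmat P π s' s :=
  Finset.sum_nonneg fun a _ => mul_nonneg (hP0 s a s') (hπ0 s a)

theorem sum_Pmat_apply [Fintype S] (hP1 : ∀ s a, ∑ s', P s a s' = 1)
    (hπ1 : ∀ s, ∑ a, π s a = 1) (s : S) :
    ∑ s', Pmat P π s' s = 1 := by
  simp only [Pmat, of_apply]
  rw [Finset.sum_comm]
  simp only [← Finset.sum_mul, hP1, one_mul, hπ1]

theorem dpi_nonneg [Fintype S] [DecidableEq S] {γ : ℝ} {μ : S → ℝ} (hγ0 : 0 ≤ γ) (hγ1 : γ < 1)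
    (hP0 : ∀ s a s', 0 ≤ P s a s') (hP1 : ∀ s a, ∑ s', P s a s' = 1)
    (hμ0 : ∀ s, 0 ≤ μ s) (hπ0 : ∀ s a, 0 ≤ π s a) (hπ1 : ∀ s, ∑ a, π s a = 1) (s : S) :
    0 ≤ dpi γ P μ π s := by
  have hinv : ∀ i j, 0 ≤ (1 - γ • Pmat P π)⁻¹ i j := by
    refine inv_one_sub_apply_nonneg_of_col_sum_lt_one
      (fun i j => mul_nonneg hγ0 (Pmat_apply_nonneg hP0 hπ0 i j)) fun j => ?_
    simpa only [Matrix.smul_apply, smul_eq_mul, ← Finset.mul_sum, sum_Pmat_apply hP1 hπ1, mul_one]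
      using hγ1
  exact mul_nonneg (sub_nonneg.mpr hγ1.le)
    (Finset.sum_nonneg fun j _ => mul_nonneg (hinv s j) (hμ0 j))

theorem Pmat_sub_Pmat_apply (s' s : S) :
    (Pmat P π' - Pmat P π) s' s = ∑ a, P s a s' * (π' s a - π s a) := by
  simp only [Pmat, Matrix.sub_apply, of_apply, mul_sub, Finset.sum_sub_distrib]

theorem sum_abs_Pmat_sub_Pmat_apply_le [Fintype S] (hP0 : ∀ s a s', 0 ≤ P s a s')
    (hP1 : ∀ s a, ∑ s', P s a s' = 1) (s : S) :
    ∑ s', |(Pmat P π' - Pmat P π) s' s| ≤ 2 * DTV π' π s :=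
  calc ∑ s', |(Pmat P π' - Pmat P π) s' s|
      ≤ ∑ s', ∑ a, P s a s' * |π' s a - π s a| := by
        gcongr with s'
        rw [Pmat_sub_Pmat_apply]
        refine (Finset.abs_sum_le_sum_abs _ _).trans_eq ?_
        simp only [abs_mul, abs_of_nonneg (hP0 s _ s')]
    _ = 2 * DTV π' π s := by
        rw [Finset.sum_comm]
        simp only [← Finset.sum_mul, hP1, one_mul, DTV]
        ring

theorem sum_abs_Pmat_sub_Pmat_mulVec_le [Fintype S] (hP0 : ∀ s a s', 0 ≤ P s a s')
    (hP1 : ∀ s a, ∑ s', P s a s' = 1) {d : S → ℝ} (hd : ∀ s, 0 ≤ d s) :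
    ∑ s', |∑ s, (Pmat P π' - Pmat P π) s' s * d s| ≤ 2 * ∑ s, d s * DTV π' π s :=
  calc ∑ s', |∑ s, (Pmat P π' - Pmat P π) s' s * d s|
      ≤ ∑ s', ∑ s, |(Pmat P π' - Pmat P π) s' s| * d s := by
        gcongr with s'
        refine (Finset.abs_sum_le_sum_abs _ _).trans_eq ?_
        simp only [abs_mul, abs_of_nonneg (hd _)]
    _ = ∑ s, d s * ∑ s', |(Pmat P π' - Pmat P π) s' s| := by
        rw [Finset.sum_comm]
        simp only [Finset.mul_sum, mul_comm]
    _ ≤ ∑ s, d s * (2 * DTV π' π s) := by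
        gcongr with s
        · exact hd s
        · exact sum_abs_Pmat_sub_Pmat_apply_le hP0 hP1 s
    _ = 2 * ∑ s, d s * DTV π' π s := by
        rw [Finset.mul_sum]
        simp only [mul_left_comm]

end MDP

theorem stmt_8_general {S A : Type*} [Fintype S] [Fintype A] [DecidableEq S]
    (γ : ℝ) (hγ0 : 0 ≤ γ) (hγ1 : γ < 1)
    (P : S → A → S → ℝ) (hP0 : ∀ s a s', 0 ≤ P s a s') (hP1 : ∀ s a, ∑ s', P s a s' = 1)
    (μ : S → ℝ) (hμ0 : ∀ s, 0 ≤ μ s)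
    (π π' : S → A → ℝ)
    (hπ0 : ∀ s a, 0 ≤ π s a) (hπ1 : ∀ s, ∑ a, π s a = 1) :
    ∑ s' : S, |∑ s : S, (Pmat P π' - Pmat P π) s' s * dpi γ P μ π s|
      ≤ 2 * ∑ s, dpi γ P μ π s * DTV π' π s :=
  sum_abs_Pmat_sub_Pmat_mulVec_le hP0 hP1 (dpi_nonneg hγ0 hγ1 hP0 hP1 hμ0 hπ0 hπ1)

theorem stmt_8 {S A : Type*} [Fintype S] [Fintype A] [Nonempty S] [Nonempty A] [DecidableEq S]
    (γ : ℝ) (hγ0 : 0 ≤ γ) (hγ1 : γ < 1)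
    (P : S → A → S → ℝ) (hP0 : ∀ s a s', 0 ≤ P s a s') (hP1 : ∀ s a, ∑ s', P s a s' = 1)
    (μ : S → ℝ) (hμ0 : ∀ s, 0 ≤ μ s) (hμ1 : ∑ s, μ s = 1)
    (π π' : S → A → ℝ)
    (hπ0 : ∀ s a, 0 ≤ π s a) (hπ1 : ∀ s, ∑ a, π s a = 1)
    (hπ'0 : ∀ s a, 0 ≤ π' s a) (hπ'1 : ∀ s, ∑ a, π' s a = 1) :
    ∑ s' : S, |∑ s : S, (Pmat P π' - Pmat P π) s' s * dpi γ P μ π s|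
      ≤ 2 * ∑ s, dpi γ P μ π s * DTV π' π s :=
  stmt_8_general γ hγ0 hγ1 P hP0 hP1 μ hμ0 π π' hπ0 hπ1
end
end

section
/- (Per-state advantage-estimator inequality) Let A be a nonempty finite set, let p, q : A → ℝ be probability distributions on A (nonnegative, summing to 1), and let g, ĝ : A → ℝ be functions such that Σ_a q(a) g(a) = 0. Then Σ_a p(a) g(a) ≥ Σ_a p(a) ĝ(a) − Σ_a q(a) ĝ(a) − 2 (max_a |g(a) − ĝ(a)|) D_TV(p||q), where D_TV(p||q) = (1/2) Σ_a |p(a) − q(a)|. -/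
/-! Since `∑ q g = 0`, the left side minus the first two terms on the right is
`∑ (p - q) (g - ĝ)`, which Hölder's inequality (ℓ¹ against ℓ∞) bounds below by
`-(max |g - ĝ|) ∑ |p - q|`. -/

open Finset

section Holder

variable {ι R : Type*} [CommRing R] [LinearOrder R] [IsStrictOrderedRing R]

theorem Finset.abs_sum_mul_le_sup'_mul_sum_abs (s : Finset ι) (hs : s.Nonempty) (u v : ι → R) :
    |∑ i ∈ s, u i * v i| ≤ (s.sup' hs fun i => |v i|) * ∑ i ∈ s, |u i| := by
  rw [mul_sum]
  refine (abs_sum_le_sum_abs _ _).trans (sum_le_sum fun i hi => ?_)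
  rw [abs_mul, mul_comm]
  exact mul_le_mul_of_nonneg_right (le_sup' (fun i => |v i|) hi) (abs_nonneg _)

end Holder

theorem stmt_14_general {A : Type*} [Fintype A] [Nonempty A]
    (p q : A → ℝ)
    (g ghat : A → ℝ) (hg : ∑ a, q a * g a = 0) :
    ∑ a, p a * g a
      ≥ ∑ a, p a * ghat a - ∑ a, q a * ghat a
        - 2 * (Finset.univ.sup' Finset.univ_nonempty fun a => |g a - ghat a|)
          * ((1 / 2) * ∑ a, |p a - q a|) := by
  have hdecomp : ∑ a, p a * g a - (∑ a, p a * ghat a - ∑ a, q a * ghat a)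
      = ∑ a, (p a - q a) * (g a - ghat a) + ∑ a, q a * g a := by
    simp only [sub_mul, mul_sub, sum_sub_distrib]
    ring
  have hbound := (abs_le.mp
    (abs_sum_mul_le_sup'_mul_sum_abs univ univ_nonempty (fun a => p a - q a)
      (fun a => g a - ghat a))).1
  rw [hg, add_zero] at hdecomp
  linarith

theorem stmt_14 {A : Type*} [Fintype A] [Nonempty A]
    (p q : A → ℝ)
    (hp0 : ∀ a, 0 ≤ p a) (hp1 : ∑ a, p a = 1)
    (hq0 : ∀ a, 0 ≤ q a) (hq1 : ∑ a, q a = 1)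
    (g ghat : A → ℝ) (hg : ∑ a, q a * g a = 0) :
    ∑ a, p a * g a
      ≥ ∑ a, p a * ghat a - ∑ a, q a * ghat a
        - 2 * (Finset.univ.sup' Finset.univ_nonempty fun a => |g a - ghat a|)
          * ((1 / 2) * ∑ a, |p a - q a|) :=
  stmt_14_general p q g ghat hg
end
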